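/- arXiv:1804.09084 — 9 statements merged into one kernel-verified Lean document; each statement's English description precedes it below -/
import Mathlib

section
/- For the function g(u) = (1/30)(2-u)^3(4+6u+u^2) on [0,2], the Laplace transform G(z) = ∫₀² e^{-zu} g(u) du satisfies G(z) = 16/(15z) - 8/(3z³) + 4/z⁴ - 4/z⁶ + (4e^{-2z}/z⁴)·((z+1)/z)², for all nonzero complex z. -/
/-! Repeated integration by parts: for a polynomial `p` of degree `< n`,
`e^{-zu} Q(u)` with `Q = -∑_{k<n} p^{(k)} / z^{k+1}` is a primitive of `e^{-zu} p(u)`, so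
`∫ₐᵇ e^{-zu} p = ∑_{k<n} (e^{-za} p^{(k)}(a) - e^{-zb} p^{(k)}(b)) / z^{k+1}`.
Here `30 g = 32 - 40u² + 20u³ - u⁵` has a triple zero at `u = 2`, so only `g'''`, `g⁗`, `g⁽⁵⁾`
contribute there, giving `e^{-2z}(120/z⁴ + 240/z⁵ + 120/z⁶) / 30 = 4 e^{-2z} (z+1)² / z⁶`. -/

open MeasureTheory intervalIntegral Polynomial Finset Set

theorem integral_cexp_neg_mul_mul_eq_of_hasDerivAt {z : ℂ} {a b : ℝ} {f Q : ℝ → ℂ}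
    (hQ : ∀ u ∈ uIcc a b, HasDerivAt Q (f u + z * Q u) u)
    (hf : IntervalIntegrable (fun u : ℝ => Complex.exp (-z * u) * f u) volume a b) :
    ∫ u in a..b, Complex.exp (-z * u) * f u =
      Complex.exp (-z * b) * Q b - Complex.exp (-z * a) * Q a := by
  refine integral_eq_sub_of_hasDerivAt (f := fun u => Complex.exp (-z * u) * Q u)
    (fun u hu => ?_) hf
  have hexp : HasDerivAt (fun x : ℝ => Complex.exp (-z * x)) (Complex.exp (-z * u) * -z) u := by
    simpa using ((hasDerivAt_id (u : ℂ)).const_mul (-z)).cexp.comp_ofReal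
  refine (hexp.mul (hQ u hu)).congr_deriv ?_
  ring

namespace Polynomial

noncomputable def cexpPrimitive (z : ℂ) (n : ℕ) (p : ℂ[X]) : ℂ[X] :=
  -∑ k ∈ range n, C (z ^ (k + 1))⁻¹ * derivative^[k] p

theorem derivative_cexpPrimitive {z : ℂ} (hz : z ≠ 0) {n : ℕ} {p : ℂ[X]}
    (hn : p.natDegree < n) :
    derivative (cexpPrimitive z n p) = p + C z * cexpPrimitive z n p := by
  set T : ℕ → ℂ[X] := fun k => C (z ^ k)⁻¹ * derivative^[k] p
  have hderiv : derivative (cexpPrimitive z n p) = -∑ k ∈ range n, T (k + 1) := by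
    simp [cexpPrimitive, T, Function.iterate_succ_apply']
  have hmul : C z * cexpPrimitive z n p = -∑ k ∈ range n, T k := by
    simp only [cexpPrimitive, T, mul_neg, mul_sum, ← mul_assoc, ← C_mul]
    congr 2 with k
    rw [pow_succ, mul_inv, mul_left_comm, mul_inv_cancel₀ hz, mul_one]
  have htelescope : ∑ k ∈ range n, (T k - T (k + 1)) = p := by
    rw [sum_range_sub']
    simp [T, iterate_derivative_eq_zero hn]
  rw [hderiv, hmul, ← htelescope, sum_sub_distrib]
  ring

end Polynomial

theorem integral_cexp_neg_mul_mul_eval {z : ℂ} (hz : z ≠ 0) {n : ℕ} {p : ℂ[X]}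
    (hn : p.natDegree < n) (a b : ℝ) :
    ∫ u in a..b, Complex.exp (-z * u) * p.eval (u : ℂ) =
      ∑ k ∈ range n, (Complex.exp (-z * a) * (derivative^[k] p).eval (a : ℂ)
        - Complex.exp (-z * b) * (derivative^[k] p).eval (b : ℂ)) / z ^ (k + 1) := by
  set Q := cexpPrimitive z n p
  have hQ : ∀ u ∈ uIcc a b, HasDerivAt (fun x : ℝ => Q.eval (x : ℂ))
      (p.eval (u : ℂ) + z * Q.eval (u : ℂ)) u := fun u _ => by
    have := (Q.hasDerivAt (u : ℂ)).comp_ofReal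
    rwa [derivative_cexpPrimitive hz hn, eval_add, eval_mul, eval_C] at this
  have hint : IntervalIntegrable (fun u : ℝ => Complex.exp (-z * u) * p.eval (u : ℂ))
      volume a b :=
    (by fun_prop : Continuous _).intervalIntegrable a b
  rw [integral_cexp_neg_mul_mul_eq_of_hasDerivAt hQ hint]
  simp only [Q, cexpPrimitive, eval_neg, eval_finsetSum, eval_mul, eval_C, mul_neg, mul_sum,
    ← sum_neg_distrib, ← sum_sub_distrib]
  refine sum_congr rfl fun k _ => ?_
  ring

theorem stmt_0 (z : ℂ) (hz : z ≠ 0) :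
    (∫ u in (0:ℝ)..2, Complex.exp (-z * (u:ℂ)) *
      ((1/30 * (2 - u)^3 * (4 + 6*u + u^2) : ℝ) : ℂ)) =
    16 / (15 * z) - 8 / (3 * z^3) + 4 / z^4 - 4 / z^6 +
      (4 * Complex.exp (-2 * z) / z^4) * ((z + 1) / z)^2 := by
  set p : ℂ[X] := C (1 / 30) * (32 - 40 * X ^ 2 + 20 * X ^ 3 - X ^ 5)
  have hp : p.natDegree < 6 := Nat.lt_succ_of_le (by unfold p; compute_degree)
  have hg : ∀ u : ℝ, ((1/30 * (2 - u)^3 * (4 + 6*u + u^2) : ℝ) : ℂ) = p.eval (u : ℂ) := by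
    intro u
    push_cast
    simp only [p, eval_mul, eval_C, eval_sub, eval_add, eval_pow, eval_X, eval_ofNat]
    ring
  simp_rw [hg, integral_cexp_neg_mul_mul_eval hz hp, sum_range_succ, sum_range_zero]
  simp only [p, Function.iterate_succ_apply', Function.iterate_zero_apply, derivative_sub,
    derivative_add, derivative_mul, derivative_ofNat, derivative_X_pow, derivative_C,
    derivative_zero, zero_mul, zero_add, eval_mul, eval_C, eval_sub, eval_add, eval_pow, eval_X,
    eval_ofNat, eval_zero]
  norm_num
  field_simp
  ring
end

section
/- For all real y, the real part of G(iy) = ∫₀² g(u) e^{-iyu} du is nonnegative, where g(u) = (1/30)(2-u)^3(4+6u+u^2). -/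
/-!
Taking real parts, `Re G(iy) = ∫₀² g(u) cos(yu) du`. Since `g(|u|)` is the autocorrelation of
`1 - t²` on `[-1, 1]`, this cosine transform is a square: for `y ≠ 0` an explicit primitive gives
`8 (sin y - y cos y)² / y⁶ = 2 (∫₀¹ (1 - t²) cos(ty) dt)²`, and for `y = 0` it is `∫₀² g ≥ 0`.
-/

open Real Complex intervalIntegral

theorem re_intervalIntegral_cexp_mul_ofReal {a b : ℝ} {f : ℝ → ℝ}
    (hf : IntervalIntegrable f MeasureTheory.volume a b) (y : ℝ) :
    (∫ u in a..b, cexp (-(I * y) * u) * (f u : ℂ)).re = ∫ u in a..b, f u * Real.cos (y * u) := by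
  have hint : IntervalIntegrable (fun u : ℝ => cexp (-(I * y) * u) * (f u : ℂ))
      MeasureTheory.volume a b :=
    IntervalIntegrable.continuousOn_mul ⟨hf.1.ofReal, hf.2.ofReal⟩ (by fun_prop)
  rw [← RCLike.re_eq_complex_re, ← intervalIntegral_re hint]
  refine integral_congr fun u _ => ?_
  rw [show -(I * y) * u = ((-(y * u) : ℝ) : ℂ) * I by push_cast; ring, RCLike.re_eq_complex_re,
    re_mul_ofReal, exp_ofReal_mul_I_re, Real.cos_neg, mul_comm]

theorem HasDerivAt.mul_sin_add_mul_cos {P Q : ℝ → ℝ} {P' Q' u : ℝ} (hP : HasDerivAt P P' u)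
    (hQ : HasDerivAt Q Q' u) (y : ℝ) :
    HasDerivAt (fun u => P u * Real.sin (y * u) + Q u * Real.cos (y * u))
      ((P' - y * Q u) * Real.sin (y * u) + (Q' + y * P u) * Real.cos (y * u)) u := by
  have hlin : HasDerivAt (fun u => y * u) y u := by simpa using (hasDerivAt_id u).const_mul y
  exact ((hP.mul hlin.sin).add (hQ.mul hlin.cos)).congr_deriv (by ring)

noncomputable def g (u : ℝ) : ℝ := 1 / 30 * (2 - u) ^ 3 * (4 + 6 * u + u ^ 2)

theorem continuous_g : Continuous g := by
  unfold g
  fun_prop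

theorem g_nonneg {u : ℝ} (hu : u ∈ Set.Icc (0 : ℝ) 2) : 0 ≤ g u := by
  have h₁ : 0 ≤ 2 - u := by linarith [hu.2]
  have h₂ : 0 ≤ 4 + 6 * u + u ^ 2 := by nlinarith [hu.1]
  unfold g
  positivity

-- The polynomial coefficients of a primitive of `g u * cos (y u)`, obtained by integrating by
-- parts until the polynomial factor vanishes.
namespace gCosPrimitive

noncomputable def sinCoeff (y u : ℝ) : ℝ :=
  y ^ 5 * (32 - 40 * u ^ 2 + 20 * u ^ 3 - u ^ 5) + y ^ 3 * (80 - 120 * u + 20 * u ^ 3) - 120 * y * u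

noncomputable def cosCoeff (y u : ℝ) : ℝ :=
  y ^ 4 * (-80 * u + 60 * u ^ 2 - 5 * u ^ 4) + y ^ 2 * (60 * u ^ 2 - 120) - 120

theorem hasDerivAt_sinCoeff (y u : ℝ) : HasDerivAt (sinCoeff y) (y * cosCoeff y u) u := by
  unfold sinCoeff cosCoeff
  refine (hasDerivAt_deriv_iff.2 (by fun_prop)).congr_deriv ?_
  simp (disch := fun_prop) only [deriv_fun_add, deriv_fun_sub, deriv_fun_mul,
    deriv_const, deriv_fun_pow, deriv_id'', deriv_const_mul_id]
  ring

theorem hasDerivAt_cosCoeff (y u : ℝ) :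
    HasDerivAt (cosCoeff y) (30 * y ^ 6 * g u - y * sinCoeff y u) u := by
  unfold g sinCoeff cosCoeff
  refine (hasDerivAt_deriv_iff.2 (by fun_prop)).congr_deriv ?_
  simp (disch := fun_prop) only [deriv_fun_add, deriv_fun_sub,
    deriv_fun_mul, deriv_const, deriv_fun_pow, deriv_id'', deriv_const_mul_id]
  ring

end gCosPrimitive

open gCosPrimitive

noncomputable def gCosPrimitive (y u : ℝ) : ℝ :=
  (sinCoeff y u * Real.sin (y * u) + cosCoeff y u * Real.cos (y * u)) / (30 * y ^ 6)

theorem hasDerivAt_gCosPrimitive {y : ℝ} (hy : y ≠ 0) (u : ℝ) :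
    HasDerivAt (gCosPrimitive y) (g u * Real.cos (y * u)) u := by
  refine (((hasDerivAt_sinCoeff y u).mul_sin_add_mul_cos (hasDerivAt_cosCoeff y u) y).div_const
    (30 * y ^ 6)).congr_deriv ?_
  field_simp
  ring

theorem integral_g_mul_cos {y : ℝ} (hy : y ≠ 0) :
    ∫ u in (0 : ℝ)..2, g u * Real.cos (y * u) = 8 * (Real.sin y - y * Real.cos y) ^ 2 / y ^ 6 := by
  rw [integral_eq_sub_of_hasDerivAt (fun u _ => hasDerivAt_gCosPrimitive hy u)
    ((continuous_g.mul (by fun_prop)).intervalIntegrable _ _)]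
  simp only [gCosPrimitive, sinCoeff, cosCoeff, mul_two, Real.sin_add, Real.cos_add, mul_zero,
    Real.sin_zero, Real.cos_zero]
  field_simp
  linear_combination (-120 - 120 * y ^ 2) * Real.sin_sq_add_cos_sq y

theorem integral_g_mul_cos_nonneg (y : ℝ) : 0 ≤ ∫ u in (0 : ℝ)..2, g u * Real.cos (y * u) := by
  rcases eq_or_ne y 0 with rfl | hy
  · simp only [zero_mul, Real.cos_zero, mul_one]
    exact integral_nonneg zero_le_two fun u hu => g_nonneg hu
  · rw [integral_g_mul_cos hy]
    positivity

theorem stmt_2 (y : ℝ) :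
    0 ≤ (∫ u in (0:ℝ)..2, Complex.exp (-(Complex.I * y) * (u:ℂ)) *
      ((1/30 * (2 - u)^3 * (4 + 6*u + u^2) : ℝ) : ℂ)).re :=
  (integral_g_mul_cos_nonneg y).trans_eq
    (re_intervalIntegral_cexp_mul_ofReal (continuous_g.intervalIntegrable 0 2) y).symm
end

section
/- For every complex number z with Re z ≥ 0, Re G(z) ≥ 0, where G(z) = ∫₀² e^{-zu} g(u) du with g(u) = (1/30)(2-u)^3(4+6u+u^2). -/
/-!
The kernel is an autocorrelation: with `h s = s (2 - s)`, `g u = ∫_u^2 h s h (s - u) ds`.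
Swapping the order of integration over the triangle `0 ≤ u ≤ s ≤ 2` gives
`G z = ∫_0^2 h s H s ds` with `H s = ∫_0^s e^{-zu} h (s - u) du`, and `H' = h - z H`, `H 0 = 0`.
As `h` is real, `Re (h H) = Re ((H' + z H) conj H) = (|H|²)'/2 + Re z |H|²`, so
`Re G z = |H 2|²/2 + Re z ∫_0^2 |H|² ≥ 0`.
-/

open Complex MeasureTheory Set intervalIntegral Function

theorem integral_integral_triangle_swap {E : Type*} [NormedAddCommGroup E] [NormedSpace ℝ E]
    {f : ℝ → ℝ → E} (hf : Continuous (uncurry f)) {a b : ℝ} (hab : a ≤ b) :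
    ∫ s in a..b, ∫ u in a..s, f s u = ∫ u in a..b, ∫ s in u..b, f s u := by
  set G : ℝ → ℝ → E := fun s u => if u ≤ s then f s u else 0
  have hG : IntegrableOn (uncurry G) (uIoc a b ×ˢ uIoc a b) := by
    have hsq : IntegrableOn (uncurry f) (uIcc a b ×ˢ uIcc a b) :=
      hf.continuousOn.integrableOn_compact (isCompact_uIcc.prod isCompact_uIcc)
    have hGf : uncurry G = {p : ℝ × ℝ | p.2 ≤ p.1}.indicator (uncurry f) := by
      ext ⟨s, u⟩
      simp [G, indicator_apply]
    rw [hGf]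
    exact (hsq.mono_set (prod_mono uIoc_subset_uIcc uIoc_subset_uIcc)).indicator
      (measurableSet_le measurable_snd measurable_fst)
  have hleft : ∀ s ∈ uIcc a b, ∫ u in a..b, G s u = ∫ u in a..s, f s u := by
    intro s hs
    rw [uIcc_of_le hab] at hs
    have hind : ∀ u, G s u = (Iic s).indicator (f s) u := fun u => by simp [G, indicator_apply]
    rw [integral_of_le hab, integral_of_le hs.1, funext hind,
      setIntegral_indicator measurableSet_Iic, Ioc_inter_Iic, min_eq_right hs.2]
  have hright : ∀ u ∈ uIcc a b, ∫ s in a..b, G s u = ∫ s in u..b, f s u := by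
    intro u hu
    rw [uIcc_of_le hab] at hu
    have hind : ∀ s, G s u = (Ici u).indicator (fun s => f s u) s := fun s => by
      simp [G, indicator_apply]
    rw [integral_of_le hab, integral_of_le hu.2, funext hind,
      setIntegral_indicator measurableSet_Ici,
      setIntegral_congr_set ((ae_eq_refl _).inter Ioi_ae_eq_Ici.symm), Ioc_inter_Ioi,
      sup_eq_right.2 hu.1]
  rw [← integral_congr hleft, ← integral_congr hright, intervalIntegral_intervalIntegral_swap hG]

theorem integral_cexp_mul_comp_sub_eq (h : ℝ → ℝ) (z : ℂ) (s : ℝ) :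
    ∫ u in 0..s, cexp (-z * u) * h (s - u) = cexp (-z * s) * ∫ t in 0..s, cexp (z * t) * h t := by
  rw [← intervalIntegral.integral_const_mul]
  have hsub := integral_comp_sub_left (fun t => cexp (-z * s) * (cexp (z * t) * h t))
    (a := 0) (b := s) s
  simp only [sub_self, sub_zero] at hsub
  rw [← hsub]
  congr 1 with u
  rw [← mul_assoc, ← Complex.exp_add]
  push_cast
  ring_nf

theorem hasDerivAt_integral_cexp_mul_comp_sub {h : ℝ → ℝ} (hh : Continuous h) (z : ℂ) (s : ℝ) :
    HasDerivAt (fun s => ∫ u in 0..s, cexp (-z * u) * h (s - u))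
      (h s - z * ∫ u in 0..s, cexp (-z * u) * h (s - u)) s := by
  simp only [integral_cexp_mul_comp_sub_eq]
  have hexp : HasDerivAt (fun s : ℝ => cexp (-z * s)) (cexp (-z * s) * -z) s := by
    simpa using ((hasDerivAt_id (s : ℂ)).const_mul (-z)).cexp.comp_ofReal
  have hprim := (Continuous.integral_hasStrictDerivAt (f := fun t : ℝ => cexp (z * t) * h t)
    (by fun_prop) 0 s).hasDerivAt
  refine (hexp.mul hprim).congr_deriv ?_
  have hinv : cexp (-z * s) * cexp (z * s) = 1 := by rw [← Complex.exp_add]; simp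
  linear_combination (h s : ℂ) * hinv

theorem re_integral_mul_nonneg_of_hasDerivAt {h : ℝ → ℝ} {H : ℝ → ℂ} {z : ℂ} {T : ℝ}
    (hz : 0 ≤ z.re) (hT : 0 ≤ T) (hh : Continuous h) (hH0 : H 0 = 0)
    (hH : ∀ s, HasDerivAt H (h s - z * H s) s) :
    0 ≤ (∫ s in 0..T, h s * H s).re := by
  have hHc : Continuous H := continuous_iff_continuousAt.2 fun s => (hH s).continuousAt
  have henergy : ∀ s, HasDerivAt (fun t => ‖H t‖ ^ 2 / 2)
      (h s * (H s).re - z.re * ‖H s‖ ^ 2) s := by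
    intro s
    refine ((hH s).norm_sq.div_const 2).congr_deriv ?_
    rw [Complex.inner, ← Complex.normSq_eq_norm_sq, Complex.normSq_apply]
    simp only [mul_re, sub_re, ofReal_re, ofReal_im, conj_re, conj_im, mul_im, sub_im]
    ring
  have hdissipation : ∫ s in 0..T, (h s * (H s).re - z.re * ‖H s‖ ^ 2) = ‖H T‖ ^ 2 / 2 := by
    rw [integral_eq_sub_of_hasDerivAt (fun s _ => henergy s)
      (Continuous.intervalIntegrable (by fun_prop) _ _), hH0]
    simp
  have hre : (∫ s in 0..T, h s * H s).re
      = ‖H T‖ ^ 2 / 2 + ∫ s in 0..T, z.re * ‖H s‖ ^ 2 := by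
    rw [← hdissipation, ← integral_add (Continuous.intervalIntegrable (by fun_prop) _ _)
      (Continuous.intervalIntegrable (by fun_prop) _ _), ← RCLike.re_to_complex,
      ← intervalIntegral_re (Continuous.intervalIntegrable (by fun_prop) _ _)]
    simp
  rw [hre]
  exact add_nonneg (by positivity) (integral_nonneg hT fun s _ => by positivity)

theorem re_integral_cexp_mul_autocorrelation_nonneg {h : ℝ → ℝ} (hh : Continuous h) {z : ℂ}
    (hz : 0 ≤ z.re) {T : ℝ} (hT : 0 ≤ T) :
    0 ≤ (∫ u in 0..T, cexp (-z * u) * ((∫ s in u..T, h s * h (s - u) : ℝ) : ℂ)).re := by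
  have hswap : ∫ u in 0..T, cexp (-z * u) * ((∫ s in u..T, h s * h (s - u) : ℝ) : ℂ)
      = ∫ s in 0..T, h s * ∫ u in 0..s, cexp (-z * u) * h (s - u) := by
    simp_rw [← intervalIntegral.integral_const_mul]
    rw [integral_integral_triangle_swap (by fun_prop) hT]
    refine integral_congr fun u _ => ?_
    rw [← intervalIntegral.integral_ofReal, ← intervalIntegral.integral_const_mul]
    refine integral_congr fun s _ => ?_
    push_cast
    ring
  rw [hswap]
  exact re_integral_mul_nonneg_of_hasDerivAt hz hT hh integral_same
    (hasDerivAt_integral_cexp_mul_comp_sub hh z)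

theorem integral_autocorrelation_mul_two_sub (u : ℝ) :
    ∫ s in u..2, s * (2 - s) * ((s - u) * (2 - (s - u)))
      = 1 / 30 * (2 - u) ^ 3 * (4 + 6 * u + u ^ 2) := by
  have hprim : ∀ s ∈ uIcc u 2, HasDerivAt
      (fun s : ℝ => s ^ 5 / 5 - (u + 2) * s ^ 4 / 2 + (u ^ 2 + 6 * u + 4) * s ^ 3 / 3
        - u * (u + 2) * s ^ 2)
      (s * (2 - s) * ((s - u) * (2 - (s - u)))) s := by
    intro s _
    refine (((((hasDerivAt_pow 5 s).div_const 5).fun_sub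
      (((hasDerivAt_pow 4 s).const_mul (u + 2)).div_const 2)).fun_add
      (((hasDerivAt_pow 3 s).const_mul (u ^ 2 + 6 * u + 4)).div_const 3)).fun_sub
      ((hasDerivAt_pow 2 s).const_mul (u * (u + 2)))).congr_deriv ?_
    push_cast
    ring
  rw [integral_eq_sub_of_hasDerivAt hprim (Continuous.intervalIntegrable (by fun_prop) _ _)]
  ring

theorem stmt_3 (z : ℂ) (hz : 0 ≤ z.re) :
    0 ≤ (∫ u in (0:ℝ)..2, Complex.exp (-z * (u:ℂ)) *
      ((1/30 * (2 - u)^3 * (4 + 6*u + u^2) : ℝ) : ℂ)).re := by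
  have h := re_integral_cexp_mul_autocorrelation_nonneg (h := fun s => s * (2 - s))
    (by fun_prop) hz zero_le_two
  simpa only [integral_autocorrelation_mul_two_sub] using h
end

section
/- Let F(z) = ∫₀² e^{-zv} f(v) dv with f continuous, f ≥ 0 on [0,2], and f not identically zero. Then for every t with |t| ≤ π/2, the function x ↦ Re F(x+it)/F(x) is monotonically increasing on all of ℝ. -/
/-!
Since `Re F(x + it) = ∫ cos(tv) e^{-xv} f(v) dv`, the ratio is the mean of `c(v) = cos(tv)`
under the probability density proportional to `e^{-xv} f(v)` on `[0, 2]`. For `|t| ≤ π/2`, `c` is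
decreasing on `[0, 2]`, and for `x₁ ≤ x₂` the density ratio `e^{-x₂v} / e^{-x₁v}` is decreasing
too, so the mean can only grow with `x`. This is Chebyshev's integral inequality: with
`g = e^{-x₁v} f` and `h = e^{-x₂v} f`, the integrand `(c u - c v) (g u h v - h u g v)` is
nonpositive on `[0, 2]²`, and its integral is twice `(∫ c g)(∫ h) - (∫ c h)(∫ g)`.
-/

open MeasureTheory Set Real

lemma re_intervalIntegral_cexp_mul {f : ℝ → ℝ} {a b : ℝ} (hf : IntervalIntegrable f volume a b)
    (x t : ℝ) :
    (∫ v in a..b, Complex.exp (-(x + t * Complex.I) * v) * f v).re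
      = ∫ v in a..b, cos (t * v) * (exp (-x * v) * f v) := by
  have hint : IntervalIntegrable (fun v : ℝ => Complex.exp (-(x + t * Complex.I) * v) * f v)
      volume a b :=
    (show IntervalIntegrable (fun v => (f v : ℂ)) volume a b from
      ⟨hf.1.ofReal, hf.2.ofReal⟩).continuousOn_mul (by fun_prop)
  rw [← RCLike.re_to_complex, ← intervalIntegral.intervalIntegral_re hint]
  refine intervalIntegral.integral_congr fun v _ => ?_
  simp only [RCLike.re_to_complex, Complex.exp_re, Complex.mul_re, Complex.mul_im,
    Complex.neg_re, Complex.neg_im, Complex.add_re, Complex.add_im, Complex.ofReal_re,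
    Complex.ofReal_im, Complex.I_re, Complex.I_im, mul_zero, mul_one, sub_zero,
    add_zero, zero_add, neg_mul, cos_neg]
  ring

lemma sub_mul_sub_nonpos_of_antitoneOn {α : Type*} [LinearOrder α] {S : Set α}
    {c g h : α → ℝ} (hc : AntitoneOn c S)
    (hgh : ∀ u ∈ S, ∀ v ∈ S, u ≤ v → g u * h v ≤ g v * h u)
    {u v : α} (hu : u ∈ S) (hv : v ∈ S) :
    (c u - c v) * (g u * h v - h u * g v) ≤ 0 := by
  rcases le_total u v with huv | hvu
  · exact mul_nonpos_of_nonneg_of_nonpos (sub_nonneg.2 (hc hu hv huv))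
      (by linarith [hgh u hu v hv huv])
  · exact mul_nonpos_of_nonpos_of_nonneg (sub_nonpos.2 (hc hv hu hvu))
      (by linarith [hgh v hv u hu hvu])

theorem integral_mul_integral_le_of_antitoneOn {α : Type*} [LinearOrder α] [MeasurableSpace α]
    {μ : Measure α} [SigmaFinite μ] {S : Set α} (hS : ∀ᵐ u ∂μ, u ∈ S)
    {c g h : α → ℝ} (hg : Integrable g μ) (hh : Integrable h μ)
    (hcg : Integrable (fun u => c u * g u) μ) (hch : Integrable (fun u => c u * h u) μ)
    (hc : AntitoneOn c S) (hgh : ∀ u ∈ S, ∀ v ∈ S, u ≤ v → g u * h v ≤ g v * h u) :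
    (∫ u, c u * g u ∂μ) * ∫ u, h u ∂μ ≤ (∫ u, c u * h u ∂μ) * ∫ u, g u ∂μ := by
  have hS2 : ∀ᵐ z ∂μ.prod μ, z.1 ∈ S ∧ z.2 ∈ S :=
    (Measure.quasiMeasurePreserving_fst.ae hS).and (Measure.quasiMeasurePreserving_snd.ae hS)
  have hsign : ∫ z, (c z.1 - c z.2) * (g z.1 * h z.2 - h z.1 * g z.2) ∂μ.prod μ ≤ 0 :=
    integral_nonpos_of_ae <| hS2.mono fun z hz => sub_mul_sub_nonpos_of_antitoneOn hc hgh hz.1 hz.2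
  have hexpand : ∫ z, (c z.1 - c z.2) * (g z.1 * h z.2 - h z.1 * g z.2) ∂μ.prod μ
      = 2 * ((∫ u, c u * g u ∂μ) * ∫ u, h u ∂μ - (∫ u, c u * h u ∂μ) * ∫ u, g u ∂μ) := by
    have hfun : (fun z : α × α => (c z.1 - c z.2) * (g z.1 * h z.2 - h z.1 * g z.2))
        = fun z => (c z.1 * g z.1 * h z.2 + h z.1 * (c z.2 * g z.2))
          - (c z.1 * h z.1 * g z.2 + g z.1 * (c z.2 * h z.2)) := by
      ext z; ring
    rw [hfun, integral_sub ?_ ?_, integral_add ?_ ?_, integral_add ?_ ?_,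
      integral_prod_mul (fun u => c u * g u) h, integral_prod_mul h (fun u => c u * g u),
      integral_prod_mul (fun u => c u * h u) g, integral_prod_mul g (fun u => c u * h u)]
    · ring
    exacts [hch.mul_prod hg, hg.mul_prod hch, hcg.mul_prod hh, hh.mul_prod hcg,
      (hcg.mul_prod hh).add (hh.mul_prod hcg), (hch.mul_prod hg).add (hg.mul_prod hch)]
  linarith

lemma antitoneOn_cos_mul {t b : ℝ} (htb : |t| * b ≤ π) :
    AntitoneOn (fun u => cos (t * u)) (Icc 0 b) := by
  intro u hu v hv huv
  have hcos_abs : ∀ w ∈ Icc 0 b, cos (t * w) = cos (|t| * w) := fun w hw => by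
    rw [← cos_abs (t * w), abs_mul, abs_of_nonneg hw.1]
  have hmem : ∀ w ∈ Icc 0 b, |t| * w ∈ Icc 0 π := fun w hw =>
    ⟨mul_nonneg (abs_nonneg t) hw.1, (mul_le_mul_of_nonneg_left hw.2 (abs_nonneg t)).trans htb⟩
  simp only [hcos_abs u hu, hcos_abs v hv]
  exact antitoneOn_cos (hmem u hu) (hmem v hv) (mul_le_mul_of_nonneg_left huv (abs_nonneg t))

lemma exp_neg_mul_mul_le {x₁ x₂ u v a b : ℝ} (hx : x₁ ≤ x₂) (huv : u ≤ v)
    (ha : 0 ≤ a) (hb : 0 ≤ b) :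
    exp (-x₁ * u) * a * (exp (-x₂ * v) * b) ≤ exp (-x₁ * v) * b * (exp (-x₂ * u) * a) := by
  have hexp : exp (-x₁ * u) * exp (-x₂ * v) ≤ exp (-x₁ * v) * exp (-x₂ * u) := by
    rw [← exp_add, ← exp_add, exp_le_exp]
    nlinarith
  calc exp (-x₁ * u) * a * (exp (-x₂ * v) * b) = exp (-x₁ * u) * exp (-x₂ * v) * (a * b) := by
        ring
    _ ≤ exp (-x₁ * v) * exp (-x₂ * u) * (a * b) :=
        mul_le_mul_of_nonneg_right hexp (mul_nonneg ha hb)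
    _ = exp (-x₁ * v) * b * (exp (-x₂ * u) * a) := by ring

theorem stmt_6 (f : ℝ → ℝ) (hfc : ContinuousOn f (Set.Icc 0 2))
    (hfnn : ∀ v ∈ Set.Icc (0:ℝ) 2, 0 ≤ f v)
    (hfne : ∃ v ∈ Set.Icc (0:ℝ) 2, f v ≠ 0)
    (F : ℂ → ℂ) (hF : ∀ z, F z = ∫ v in (0:ℝ)..2, Complex.exp (-z * (v:ℂ)) * (f v : ℂ))
    (t : ℝ) (ht : |t| ≤ Real.pi / 2) :
    Monotone (fun x : ℝ => (F (x + t * Complex.I)).re / (F (x : ℂ)).re) := by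
  have hf : IntervalIntegrable f volume 0 2 := hfc.intervalIntegrable_of_Icc zero_le_two
  have hre : ∀ x : ℝ, (F (x + t * Complex.I)).re
      = ∫ v in Ioc 0 2, cos (t * v) * (exp (-x * v) * f v) := fun x => by
    rw [hF, re_intervalIntegral_cexp_mul hf, intervalIntegral.integral_of_le zero_le_two]
  have hre₀ : ∀ x : ℝ, (F x).re = ∫ v in Ioc 0 2, exp (-x * v) * f v := fun x => by
    have h₀ := re_intervalIntegral_cexp_mul hf x 0
    simp only [Complex.ofReal_zero, zero_mul, add_zero, cos_zero, one_mul] at h₀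
    rw [hF, h₀, intervalIntegral.integral_of_le zero_le_two]
  have hpos : ∀ x : ℝ, 0 < ∫ v in Ioc 0 2, exp (-x * v) * f v := fun x => by
    obtain ⟨v₀, hv₀, hfv₀⟩ := hfne
    rw [← intervalIntegral.integral_of_le zero_le_two]
    exact intervalIntegral.integral_pos zero_lt_two (by fun_prop)
      (fun v hv => mul_nonneg (exp_pos _).le (hfnn v (Ioc_subset_Icc_self hv)))
      ⟨v₀, hv₀, mul_pos (exp_pos _) ((hfnn v₀ hv₀).lt_of_ne' hfv₀)⟩
  have hint : ∀ φ : ℝ → ℝ, ContinuousOn φ (Icc 0 2) → IntegrableOn φ (Ioc 0 2) :=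
    fun φ hφ => hφ.integrableOn_Icc.mono_set Ioc_subset_Icc_self
  intro x₁ x₂ hx
  simp only [hre, hre₀]
  rw [div_le_div_iff₀ (hpos x₁) (hpos x₂)]
  refine integral_mul_integral_le_of_antitoneOn (ae_restrict_mem measurableSet_Ioc)
    (hint _ (by fun_prop)) (hint _ (by fun_prop)) (hint _ (by fun_prop)) (hint _ (by fun_prop))
    ((antitoneOn_cos_mul (by linarith)).mono Ioc_subset_Icc_self) fun u hu v hv huv => ?_
  exact exp_neg_mul_mul_le hx huv (hfnn u (Ioc_subset_Icc_self hu))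
    (hfnn v (Ioc_subset_Icc_self hv))
end

section
/- Let f : [0,2] → ℝ be continuous, nonnegative, not identically zero, k(v) = f(v)e^{-xv}, h(u,x) = ∫₀^u k(v)dv, F(x) = h(2,x), and q_u(x) = h(u,x)/F(x). Then for every u ∈ [0,2], the function x ↦ q_u(x) is monotonically increasing; equivalently F(x)² (d/dx) q_u(x) = ∫_u² k(v)v dv · ∫₀^u k(y)dy − ∫_u² k(y)dy · ∫₀^u k(v)v dv ≥ 0. -/
/-!
For `x ≤ y` the weight `e^{-yv}` is `e^{-xv}` multiplied by the decreasing factor `e^{-(y-x)v}`.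
With `c = e^{-(y-x)u}`, this factor is at least `c` on `[0,u]` and at most `c` on `[u,2]`, so passing
from `x` to `y` multiplies the mass of `[0,u]` by at least `c` and that of `[u,2]` by at most `c`;
hence the share of `[0,u]` in the total mass can only grow.
-/

open MeasureTheory intervalIntegral Real Set

/-- Zero denominators are allowed: by `0 / 0 = 0` the left side is then `0`. -/
theorem div_add_le_div_add_of_mul_le {A B C D c : ℝ} (hA : 0 ≤ A) (hD : 0 ≤ D) (hc : 0 < c)
    (hAC : c * A ≤ C) (hDB : D ≤ c * B) : A / (A + B) ≤ C / (C + D) := by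
  have hC : 0 ≤ C := (mul_nonneg hc.le hA).trans hAC
  rcases hA.eq_or_lt with rfl | hA
  · simpa using div_nonneg hC (add_nonneg hC hD)
  have hB : 0 ≤ B := nonneg_of_mul_nonneg_right (hD.trans hDB) hc
  have hC : 0 < C := (mul_pos hc hA).trans_le hAC
  rw [div_le_div_iff₀ (by positivity) (by positivity)]
  nlinarith [mul_le_mul_of_nonneg_left hDB hA.le, mul_le_mul_of_nonneg_right hAC hB]

section ExponentialTilt

variable {f : ℝ → ℝ} {a b x y : ℝ}

theorem exp_mul_integral_le_integral_mul_exp (hab : a ≤ b) (hfi : IntervalIntegrable f volume a b)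
    (hf : ∀ v ∈ Icc a b, 0 ≤ f v) (hxy : x ≤ y) :
    exp (-(y - x) * b) * ∫ v in a..b, f v * exp (-x * v) ≤ ∫ v in a..b, f v * exp (-y * v) := by
  rw [← intervalIntegral.integral_const_mul]
  refine integral_mono_on hab ((hfi.mul_continuousOn (by fun_prop)).const_mul _)
    (hfi.mul_continuousOn (by fun_prop)) fun v hv => ?_
  calc exp (-(y - x) * b) * (f v * exp (-x * v)) = f v * exp (-(y - x) * b + -x * v) := by
        rw [exp_add]; ring
    _ ≤ f v * exp (-y * v) :=
        mul_le_mul_of_nonneg_left (exp_le_exp.2 (by nlinarith [hv.2])) (hf v hv)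

theorem integral_mul_exp_le_exp_mul_integral (hab : a ≤ b) (hfi : IntervalIntegrable f volume a b)
    (hf : ∀ v ∈ Icc a b, 0 ≤ f v) (hxy : x ≤ y) :
    ∫ v in a..b, f v * exp (-y * v) ≤ exp (-(y - x) * a) * ∫ v in a..b, f v * exp (-x * v) := by
  rw [← intervalIntegral.integral_const_mul]
  refine integral_mono_on hab (hfi.mul_continuousOn (by fun_prop))
    ((hfi.mul_continuousOn (by fun_prop)).const_mul _) fun v hv => ?_
  calc f v * exp (-y * v) ≤ f v * exp (-(y - x) * a + -x * v) :=
        mul_le_mul_of_nonneg_left (exp_le_exp.2 (by nlinarith [hv.1])) (hf v hv)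
    _ = exp (-(y - x) * a) * (f v * exp (-x * v)) := by rw [exp_add]; ring

end ExponentialTilt

theorem stmt_7_general (f : ℝ → ℝ) (hfc : ContinuousOn f (Set.Icc 0 2))
    (hfnn : ∀ v ∈ Set.Icc (0:ℝ) 2, 0 ≤ f v)
    (u : ℝ) (hu : u ∈ Set.Icc (0:ℝ) 2) :
    Monotone (fun x : ℝ =>
      (∫ v in (0:ℝ)..u, f v * Real.exp (-x * v)) /
      (∫ v in (0:ℝ)..2, f v * Real.exp (-x * v))) := by
  have hf₁ : IntervalIntegrable f volume 0 u :=
    (hfc.mono (Icc_subset_Icc_right hu.2)).intervalIntegrable_of_Icc hu.1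
  have hf₂ : IntervalIntegrable f volume u 2 :=
    (hfc.mono (Icc_subset_Icc_left hu.1)).intervalIntegrable_of_Icc hu.2
  have hnn₁ : ∀ v ∈ Icc 0 u, 0 ≤ f v := fun v hv => hfnn v ⟨hv.1, hv.2.trans hu.2⟩
  have hnn₂ : ∀ v ∈ Icc u 2, 0 ≤ f v := fun v hv => hfnn v ⟨hu.1.trans hv.1, hv.2⟩
  intro x y hxy
  have hsplit (z : ℝ) := (integral_add_adjacent_intervals (f := fun v => f v * exp (-z * v))
    (hf₁.mul_continuousOn (by fun_prop)) (hf₂.mul_continuousOn (by fun_prop))).symm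
  simp only [hsplit]
  exact div_add_le_div_add_of_mul_le
    (integral_nonneg hu.1 fun v hv => mul_nonneg (hnn₁ v hv) (exp_pos _).le)
    (integral_nonneg hu.2 fun v hv => mul_nonneg (hnn₂ v hv) (exp_pos _).le)
    (exp_pos _) (exp_mul_integral_le_integral_mul_exp hu.1 hf₁ hnn₁ hxy)
    (integral_mul_exp_le_exp_mul_integral hu.2 hf₂ hnn₂ hxy)

theorem stmt_7 (f : ℝ → ℝ) (hfc : ContinuousOn f (Set.Icc 0 2))
    (hfnn : ∀ v ∈ Set.Icc (0:ℝ) 2, 0 ≤ f v)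
    (hfne : ∃ v ∈ Set.Icc (0:ℝ) 2, f v ≠ 0)
    (u : ℝ) (hu : u ∈ Set.Icc (0:ℝ) 2) :
    Monotone (fun x : ℝ =>
      (∫ v in (0:ℝ)..u, f v * Real.exp (-x * v)) /
      (∫ v in (0:ℝ)..2, f v * Real.exp (-x * v))) :=
  stmt_7_general f hfc hfnn u hu
end

section
/- Let ω > 0, φ ≥ 0, and define B_{φ,ω}(y) = (φ/2)·(1 - e^{-2ωy})/y + ((1 - e^{-ωy})/y)². Then B_{φ,ω} is monotonically decreasing on (0,∞), and y ↦ e^{ωy} B_{φ,ω}(y) is monotonically increasing on (0,∞). Consequently, for any Λ > 0: if λ ≥ Λ then B_{φ,ω}(λ) ≤ B_{φ,ω}(Λ), and if 0 < λ ≤ Λ then e^{-ω(Λ-λ)} B_{φ,ω}(λ) ≤ B_{φ,ω}(Λ). -/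
/-!
Both monotonicity claims come from the same fact: if `f` is convex on `[0, ∞)`, the secant slope
`(f y - f 0) / y` is monotone in `y`. For the convex function `e^{-t}` this makes `(1 - e^{-ay}) / y`
decreasing, which gives the first claim term by term. Multiplying by `e^{ωy}` turns the two terms of
`B` into `φ · sinh(ωy) / y` and `(2 sinh(ωy/2) / y)²`, and `sinh` is convex on `[0, ∞)`.
-/

open Real Set

theorem ConvexOn.monotoneOn_secant_zero_comp_mul {f : ℝ → ℝ} (hf : ConvexOn ℝ (Ici 0) f) {a : ℝ}
    (ha : 0 < a) : MonotoneOn (fun y => (f (a * y) - f 0) / y) (Ioi 0) := by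
  intro x (hx : 0 < x) y (hy : 0 < y) hxy
  have h := hf.secant_mono self_mem_Ici (by positivity : 0 ≤ a * x) (by positivity : 0 ≤ a * y)
    (by positivity) (by positivity) (by gcongr)
  simp only [sub_zero] at h
  calc (f (a * x) - f 0) / x = a * ((f (a * x) - f 0) / (a * x)) := by field_simp
    _ ≤ a * ((f (a * y) - f 0) / (a * y)) := by gcongr
    _ = (f (a * y) - f 0) / y := by field_simp

theorem convexOn_sinh_Ici : ConvexOn ℝ (Ici 0) sinh := by
  refine MonotoneOn.convexOn_of_deriv (convex_Ici 0) continuous_sinh.continuousOn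
    differentiable_sinh.differentiableOn ?_
  rw [Real.deriv_sinh, interior_Ici]
  intro x (hx : 0 < x) y (hy : 0 < y) hxy
  exact cosh_le_cosh.2 (by rwa [abs_of_pos hx, abs_of_pos hy])

theorem antitoneOn_one_sub_exp_neg_mul_div {a : ℝ} (ha : 0 < a) :
    AntitoneOn (fun y => (1 - exp (-(a * y))) / y) (Ioi 0) := by
  have hconv : ConvexOn ℝ (Ici 0) (fun t => exp (-t)) :=
    (convexOn_exp.comp_linearMap (-LinearMap.id)).subset (subset_univ _) (convex_Ici 0)
  intro x hx y hy hxy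
  have h := hconv.monotoneOn_secant_zero_comp_mul ha hx hy hxy
  simp only [neg_zero, exp_zero] at h
  have hneg (z : ℝ) : (1 - exp (-(a * z))) / z = -((exp (-(a * z)) - 1) / z) := by ring
  show _ / y ≤ _ / x
  rw [hneg, hneg]
  exact neg_le_neg h

theorem monotoneOn_sinh_mul_div {a : ℝ} (ha : 0 < a) :
    MonotoneOn (fun y => sinh (a * y) / y) (Ioi 0) := by
  simpa only [sinh_zero, sub_zero] using convexOn_sinh_Ici.monotoneOn_secant_zero_comp_mul ha

theorem exp_neg_mul_sub_mul_le_of_monotoneOn {f : ℝ → ℝ} {c : ℝ} {s : Set ℝ}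
    (hf : MonotoneOn (fun y => exp (c * y) * f y) s) {x y : ℝ} (hx : x ∈ s) (hy : y ∈ s)
    (hxy : x ≤ y) : exp (-(c * (y - x))) * f x ≤ f y :=
  calc exp (-(c * (y - x))) * f x = exp (-(c * y)) * (exp (c * x) * f x) := by
        rw [← mul_assoc, ← exp_add]; ring_nf
    _ ≤ exp (-(c * y)) * (exp (c * y) * f y) :=
        mul_le_mul_of_nonneg_left (hf hx hy hxy) (exp_pos _).le
    _ = f y := by rw [← mul_assoc, ← exp_add, neg_add_cancel, exp_zero, one_mul]

theorem exp_mul_one_sub_exp_neg_two_mul (t : ℝ) : exp t * (1 - exp (-(2 * t))) = 2 * sinh t := by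
  rw [sinh_eq, show -(2 * t) = -t + -t by ring, exp_add, exp_neg]
  field_simp

theorem exp_mul_one_sub_exp_neg_sq (t : ℝ) : exp t * (1 - exp (-t)) ^ 2 = (2 * sinh (t / 2)) ^ 2 := by
  obtain ⟨u, rfl⟩ : ∃ u, t = 2 * u := ⟨t / 2, by ring⟩
  rw [show 2 * u / 2 = u by ring, sinh_eq, two_mul, neg_add, exp_add, exp_add, exp_neg]
  field_simp

noncomputable def bPhiOmega (φ ω y : ℝ) : ℝ :=
  φ / 2 * ((1 - exp (-(2 * ω * y))) / y) + ((1 - exp (-(ω * y))) / y) ^ 2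

section

variable {φ ω : ℝ}

theorem antitoneOn_bPhiOmega (hφ : 0 ≤ φ) (hω : 0 < ω) : AntitoneOn (bPhiOmega φ ω) (Ioi 0) := by
  intro x hx y (hy : 0 < y) hxy
  have h2ω := antitoneOn_one_sub_exp_neg_mul_div (by positivity : 0 < 2 * ω) hx hy hxy
  have hω' := antitoneOn_one_sub_exp_neg_mul_div hω hx hy hxy
  have hnonneg : 0 ≤ (1 - exp (-(ω * y))) / y :=
    div_nonneg (sub_nonneg.2 (exp_le_one_iff.2 (neg_nonpos.2 (by positivity)))) hy.le
  simp only [bPhiOmega] at *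
  gcongr

theorem exp_mul_bPhiOmega (φ ω y : ℝ) :
    exp (ω * y) * bPhiOmega φ ω y = φ * (sinh (ω * y) / y) + (2 * (sinh (ω / 2 * y) / y)) ^ 2 := by
  calc exp (ω * y) * bPhiOmega φ ω y
      = φ / 2 * (exp (ω * y) * (1 - exp (-(2 * (ω * y))))) / y
        + exp (ω * y) * (1 - exp (-(ω * y))) ^ 2 / y ^ 2 := by
        rw [bPhiOmega, ← mul_assoc 2]; ring
    _ = φ * (sinh (ω * y) / y) + (2 * (sinh (ω / 2 * y) / y)) ^ 2 := by
        rw [exp_mul_one_sub_exp_neg_two_mul, exp_mul_one_sub_exp_neg_sq,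
          show ω * y / 2 = ω / 2 * y by ring]
        ring

theorem monotoneOn_exp_mul_bPhiOmega (hφ : 0 ≤ φ) (hω : 0 < ω) :
    MonotoneOn (fun y => exp (ω * y) * bPhiOmega φ ω y) (Ioi 0) := by
  intro x (hx : 0 < x) y hy hxy
  have hω' := monotoneOn_sinh_mul_div hω hx hy hxy
  have hω2 := monotoneOn_sinh_mul_div (by positivity : 0 < ω / 2) hx hy hxy
  have hnonneg : 0 ≤ sinh (ω / 2 * x) / x := div_nonneg (sinh_nonneg_iff.2 (by positivity)) hx.le
  simp only [exp_mul_bPhiOmega] at *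
  gcongr

end

theorem stmt_10 (φ ω : ℝ) (hφ : 0 ≤ φ) (hω : 0 < ω) (B : ℝ → ℝ)
    (hB : ∀ y, B y = φ / 2 * ((1 - Real.exp (-(2 * ω * y))) / y) +
      ((1 - Real.exp (-(ω * y))) / y)^2) :
    AntitoneOn B (Set.Ioi 0) ∧
    MonotoneOn (fun y => Real.exp (ω * y) * B y) (Set.Ioi 0) ∧
    (∀ Λ lam : ℝ, 0 < Λ → Λ ≤ lam → B lam ≤ B Λ) ∧
    (∀ Λ lam : ℝ, 0 < lam → lam ≤ Λ → Real.exp (-(ω * (Λ - lam))) * B lam ≤ B Λ) := by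
  obtain rfl : B = bPhiOmega φ ω := funext hB
  have anti := antitoneOn_bPhiOmega hφ hω
  have mono := monotoneOn_exp_mul_bPhiOmega hφ hω
  exact ⟨anti, mono, fun Λ lam hΛ hle => anti hΛ (hΛ.trans_le hle) hle,
    fun Λ lam hlam hle => exp_neg_mul_sub_mul_le_of_monotoneOn mono hlam (hlam.trans_le hle) hle⟩
end

section
/- Fix λ > 0 and ω > 0. Define f₁(t) = sinh((ω - t)λ) for 0 ≤ t ≤ ω and f₁(t) = 0 for t ≥ ω; let F₁(z) = ∫₀^∞ e^{-zt} f₁(t) dt and F₂(z) = ((1-e^{-ωz})/z)². Then for every complex z with Re z ≥ 0, Re F₁(z) ≥ (λ e^{ωλ}/2)·|F₂(λ + z)|. -/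
/-!
With `I(u) = ∫₀^ω e^{-ut} dt` one has `u I(u) = 1 - e^{-ωu}`, so `F₂(l + z) = I(l + z)²`, and
expanding the `sinh` gives `F₁(z) = (e^{ωl} I(z + l) - e^{-ωl} I(z - l)) / 2`. Clearing the
denominator `|l + z|²` with `u I(u) = 1 - e^{-ωu}` turns `Re F₁(z) - (l e^{ωl}/2) |F₂(l + z)|`
into a positive multiple of `x (e^{2ωl} - 1) + l (1 - e^{-2ωx}) - 4xl Re I(z - l)`, where `x = Re z`.
Since `Re I(z - l) ≤ ∫₀^ω e^{(l-x)t} dt` and `2 e^{(l-x)t} ≤ e^{2lt} + e^{-2xt}`, this is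
`≥ 2xl ∫₀^ω (e^{2lt} + e^{-2xt}) dt - 4xl ∫₀^ω e^{(l-x)t} dt ≥ 0`.
-/

open Complex intervalIntegral

noncomputable def boxLaplace (ω : ℝ) (u : ℂ) : ℂ := ∫ t in (0:ℝ)..ω, cexp (-u * t)

lemma mul_boxLaplace (ω : ℝ) (u : ℂ) : u * boxLaplace ω u = 1 - cexp (-ω * u) := by
  rcases eq_or_ne u 0 with rfl | hu
  · simp
  · rw [boxLaplace, integral_exp_mul_complex (neg_ne_zero.mpr hu)]
    field_simp
    simp

lemma boxLaplace_eq_div {u : ℂ} (ω : ℝ) (hu : u ≠ 0) :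
    boxLaplace ω u = (1 - cexp (-ω * u)) / u := by
  rw [← mul_boxLaplace, mul_div_cancel_left₀ _ hu]

lemma re_boxLaplace_le {ω : ℝ} (hω : 0 ≤ ω) (u : ℂ) :
    (boxLaplace ω u).re ≤ ∫ t in (0:ℝ)..ω, Real.exp (-u.re * t) := by
  calc (boxLaplace ω u).re ≤ ‖boxLaplace ω u‖ := re_le_norm _
    _ ≤ ∫ t in (0:ℝ)..ω, ‖cexp (-u * t)‖ := norm_integral_le_integral_norm hω
    _ = ∫ t in (0:ℝ)..ω, Real.exp (-u.re * t) := by simp [norm_exp]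

lemma mul_integral_exp_neg_mul (ω u : ℝ) :
    u * ∫ t in (0:ℝ)..ω, Real.exp (-u * t) = 1 - Real.exp (-u * ω) := by
  apply ofReal_injective
  push_cast [← integral_ofReal]
  convert mul_boxLaplace ω u using 3
  · simp [boxLaplace]
  · ring

lemma integral_exp_mul_sinh (ω l : ℝ) (z : ℂ) :
    ∫ t in (0:ℝ)..ω, cexp (-z * t) * (Real.sinh ((ω - t) * l) : ℂ)
      = (Real.exp (ω * l) * boxLaplace ω (l + z)
          - Real.exp (-(ω * l)) * boxLaplace ω (z - l)) / 2 := by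
  have h (t : ℝ) : cexp (-z * t) * (Real.sinh ((ω - t) * l) : ℂ)
      = (Real.exp (ω * l) * cexp (-(l + z) * t)
          - Real.exp (-(ω * l)) * cexp (-(z - l) * t)) / 2 := by
    rw [Real.sinh_eq]
    push_cast
    rw [mul_div_assoc', mul_sub, ← Complex.exp_add, ← Complex.exp_add, ← Complex.exp_add,
      ← Complex.exp_add]
    ring_nf
  have hint (c : ℂ) : IntervalIntegrable (fun t : ℝ => cexp (c * t)) MeasureTheory.volume 0 ω :=
    (by fun_prop : Continuous _).intervalIntegrable _ _
  simp_rw [h]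
  rw [integral_div, integral_sub ((hint _).const_mul _) ((hint _).const_mul _), integral_const_mul,
    integral_const_mul, boxLaplace, boxLaplace]

lemma two_mul_integral_exp_le (ω x l : ℝ) (hω : 0 ≤ ω) :
    2 * ∫ t in (0:ℝ)..ω, Real.exp (-(x - l) * t)
      ≤ (∫ t in (0:ℝ)..ω, Real.exp (2 * l * t)) + ∫ t in (0:ℝ)..ω, Real.exp (-(2 * x) * t) := by
  have hint (c : ℝ) : IntervalIntegrable (fun t : ℝ => Real.exp (c * t)) MeasureTheory.volume 0 ω :=
    (by fun_prop : Continuous _).intervalIntegrable _ _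
  rw [← integral_const_mul, ← integral_add (hint _) (hint _)]
  refine integral_mono_on hω ((hint _).const_mul _) ((hint _).add (hint _)) fun t _ => ?_
  have h₁ : Real.exp (-(x - l) * t) = Real.exp (l * t) * Real.exp (-(x * t)) := by
    rw [← Real.exp_add]; ring_nf
  have h₂ : Real.exp (2 * l * t) = Real.exp (l * t) ^ 2 := by
    rw [← Real.exp_nat_mul]; ring_nf
  have h₃ : Real.exp (-(2 * x) * t) = Real.exp (-(x * t)) ^ 2 := by
    rw [← Real.exp_nat_mul]; ring_nf
  rw [h₁, h₂, h₃]
  nlinarith [sq_nonneg (Real.exp (l * t) - Real.exp (-(x * t)))]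

lemma four_mul_mul_integral_exp_le {ω x l : ℝ} (hω : 0 ≤ ω) (hx : 0 ≤ x) (hl : 0 ≤ l) :
    4 * x * l * ∫ t in (0:ℝ)..ω, Real.exp (-(x - l) * t)
      ≤ x * (Real.exp (ω * l) ^ 2 - 1) + l * (1 - Real.exp (-(ω * x)) ^ 2) := by
  have hL : Real.exp (ω * l) ^ 2 = Real.exp (2 * l * ω) := by
    rw [← Real.exp_nat_mul]; ring_nf
  have hE : Real.exp (-(ω * x)) ^ 2 = Real.exp (-(2 * x) * ω) := by
    rw [← Real.exp_nat_mul]; ring_nf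
  have hI₁ := mul_integral_exp_neg_mul ω (-(2 * l))
  simp only [neg_neg] at hI₁
  rw [hL, hE]
  nlinarith [hI₁, mul_integral_exp_neg_mul ω (2 * x),
    mul_le_mul_of_nonneg_left (two_mul_integral_exp_le ω x l hω) (by positivity : 0 ≤ 2 * x * l)]

lemma normSq_mul_sub_re_eq (w A B e : ℂ) (l L : ℝ) (hA : w * A = 1 - e)
    (hB : (w - 2 * l) * B = 1 - L ^ 2 * e) :
    normSq w * (L ^ 2 * (A.re - l * normSq A) - B.re)
      = (w.re - l) * (L ^ 2 - 1) + l * (1 - L ^ 2 * normSq e) - 4 * (w.re - l) * l * B.re := by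
  have hAre := congrArg re hA
  have hAim := congrArg im hA
  have hBre := congrArg re hB
  have hBim := congrArg im hB
  simp only [← ofReal_pow, mul_re, mul_im, sub_re, sub_im, one_re, one_im, ofReal_re, ofReal_im,
    re_ofNat, im_ofNat] at hAre hAim hBre hBim
  simp only [normSq_apply]
  -- `|w|² Re A = Re (wA · w̄)`, `|w|² |A|² = |wA|²`, and likewise for `B` with `w - 2l`,
  -- whose squared modulus is `|w|² - 4 (Re w - l) l`
  linear_combination (L ^ 2 * w.re - l * L ^ 2 * (w.re * A.re - w.im * A.im + 1 - e.re)) * hAre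
    + (L ^ 2 * w.im - l * L ^ 2 * (w.re * A.im + w.im * A.re - e.im)) * hAim
    - (w.re - 2 * l) * hBre - w.im * hBim

/-- Divided by `2 e^{ωl} |l + z|²`, the left side is `Re F₁(z) - (l e^{ωl} / 2) |F₂(l + z)|`. -/
lemma normSq_mul_boxLaplace_sub_re_eq (ω l : ℝ) (z : ℂ) :
    normSq (l + z) * (Real.exp (ω * l) ^ 2 *
        ((boxLaplace ω (l + z)).re - l * normSq (boxLaplace ω (l + z))) - (boxLaplace ω (z - l)).re)
      = z.re * (Real.exp (ω * l) ^ 2 - 1) + l * (1 - Real.exp (-(ω * z.re)) ^ 2)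
        - 4 * z.re * l * (boxLaplace ω (z - l)).re := by
  have hB : ((l:ℂ) + z - 2 * l) * boxLaplace ω (z - l)
      = 1 - (Real.exp (ω * l) : ℂ) ^ 2 * cexp (-ω * (l + z)) := by
    rw [show (l:ℂ) + z - 2 * l = z - l by ring, mul_boxLaplace, ← ofReal_pow, ← Real.exp_nat_mul,
      ofReal_exp, ← Complex.exp_add]
    push_cast
    ring_nf
  have hE : Real.exp (ω * l) ^ 2 * normSq (cexp (-ω * (l + z))) = Real.exp (-(ω * z.re)) ^ 2 := by
    rw [← Complex.sq_norm, norm_exp, ← mul_pow, ← Real.exp_add]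
    simp only [neg_mul, neg_re, mul_re, ofReal_re, add_re, ofReal_im, add_im, zero_add, zero_mul,
      sub_zero]
    ring_nf
  rw [normSq_mul_sub_re_eq _ _ _ _ l _ (mul_boxLaplace ω (l + z)) hB, hE, add_re, ofReal_re,
    add_sub_cancel_left]

theorem stmt_11 (l ω : ℝ) (hl : 0 < l) (hω : 0 < ω)
    (F₁ F₂ : ℂ → ℂ)
    (hF₁ : ∀ z, F₁ z = ∫ t in (0:ℝ)..ω, Complex.exp (-z * (t:ℂ)) *
      ((Real.sinh ((ω - t) * l) : ℝ) : ℂ))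
    (hF₂ : ∀ z, F₂ z = ((1 - Complex.exp (-(ω:ℂ) * z)) / z)^2)
    (z : ℂ) (hz : 0 ≤ z.re) :
    l * Real.exp (ω * l) / 2 * ‖F₂ ((l:ℂ) + z)‖ ≤ (F₁ z).re := by
  have hw : 0 < normSq ((l:ℂ) + z) := normSq_pos.mpr fun h => by
    have := congrArg re h
    simp only [add_re, ofReal_re, zero_re] at this
    linarith
  rw [hF₂, ← boxLaplace_eq_div ω (normSq_pos.mp hw), hF₁, integral_exp_mul_sinh]
  have hid := normSq_mul_boxLaplace_sub_re_eq ω l z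
  have hBre : (boxLaplace ω (z - l)).re ≤ ∫ t in (0:ℝ)..ω, Real.exp (-(z.re - l) * t) := by
    simpa using re_boxLaplace_le hω.le (z - l)
  set A := boxLaplace ω (l + z)
  set B := boxLaplace ω (z - l)
  set L := Real.exp (ω * l)
  have hD : 0 ≤ L ^ 2 * (A.re - l * normSq A) - B.re := by
    refine nonneg_of_mul_nonneg_right ?_ hw
    rw [hid]
    nlinarith [four_mul_mul_integral_exp_le hω.le hz hl.le,
      mul_le_mul_of_nonneg_left hBre (by positivity : 0 ≤ 4 * z.re * l)]
  have hscale : Real.exp (-(ω * l)) * (L ^ 2 * (A.re - l * normSq A) - B.re)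
      = L * A.re - Real.exp (-(ω * l)) * B.re - l * L * normSq A := by
    rw [Real.exp_neg]
    field_simp
    ring
  rw [norm_pow, ← normSq_eq_norm_sq]
  simp only [div_ofNat_re, sub_re, re_ofReal_mul]
  linarith [mul_nonneg (Real.exp_pos (-(ω * l))).le hD]
end

section
/- Let G(z) = 16/(15z) - 8/(3z³) + 4/z⁴ - 4/z⁶ + (4e^{-2z}/z⁴)((z+1)/z)². For z = -b + it with 0.14 ≤ b ≤ 1.25 and |t| ≥ 8, one has Re G(z) < -1/(140|z|²). -/
/-!
Write `z = -b + it` and `N = |z|² ≥ 64`. The main term is `Re (16 / (15 z)) = -16 b / (15 N)`;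
`Re z⁻³ = b (3t² - b²) / N³` is positive and enters with a minus sign, and the remaining terms
have modulus at most `4 / N²`, `4 / N³` and `4 e^{2b} (1 + 1/N) / N² ≤ (65/16) e^{2b} / N²`.
Cleared of denominators, the resulting bound is a quadratic in `N` that is negative on `N ≥ 64`
once `(65/16)(1 + e^{2b}) < 76 b - 16/35`, and that follows from convexity of `exp`.
-/

open Complex

lemma Real.exp_le_secant {a c x : ℝ} (hax : a ≤ x) (hxc : x ≤ c) :
    (c - a) * Real.exp x ≤ (c - x) * Real.exp a + (x - a) * Real.exp c := by
  rcases (hax.trans hxc).eq_or_lt with rfl | hac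
  · simp [le_antisymm hax hxc]
  have hca : 0 < c - a := sub_pos.2 hac
  have h := convexOn_exp.2 (Set.mem_univ a) (Set.mem_univ c)
    (div_nonneg (sub_nonneg.2 hxc) hca.le) (div_nonneg (sub_nonneg.2 hax) hca.le) (by field)
  simp only [smul_eq_mul] at h
  rw [show (c - x) / (c - a) * a + (x - a) / (c - a) * c = x by field] at h
  rw [← le_div_iff₀' hca]
  convert h using 1
  field

lemma one_add_exp_two_mul_lt {b : ℝ} (hb : 0.14 ≤ b) (hb' : b ≤ 1.25) :
    65 / 16 * (1 + Real.exp (2 * b)) < 76 * b - 16 / 35 := by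
  have h₀ : Real.exp 0.28 ≤ (2 + 0.28) / (2 - 0.28) :=
    Real.exp_le_two_add_div_two_sub (by norm_num) (by norm_num)
  have h₁ : Real.exp 2.5 ≤ (5 / 3) ^ 5 := by
    rw [show (2.5 : ℝ) = (5 : ℕ) * 0.5 by norm_num, Real.exp_nat_mul]
    gcongr
    exact (Real.exp_le_two_add_div_two_sub (by norm_num) (by norm_num)).trans_eq (by norm_num)
  -- the chord bound is linear in `b`, so only the endpoints `b = 0.14` and `b = 1.25` matter
  have := Real.exp_le_secant (a := 0.28) (c := 2.5) (x := 2 * b) (by linarith) (by linarith)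
  nlinarith

lemma Complex.re_inv_pow_three (z : ℂ) :
    ((z ^ 3)⁻¹).re = (z.re ^ 3 - 3 * z.re * z.im ^ 2) / normSq z ^ 3 := by
  rw [inv_re, map_pow]
  congr 1
  simp [pow_succ, mul_re, mul_im]
  ring

lemma Complex.normSq_add_one_le {z : ℂ} (hz : z.re ≤ 0) : normSq (z + 1) ≤ normSq z + 1 := by
  simp only [normSq_apply, add_re, one_re, add_im, one_im]
  nlinarith

lemma re_laplaceG_majorant_lt {b N E : ℝ} (hb : 0.14 ≤ b) (hb' : b ≤ 1.25) (hN : 64 ≤ N)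
    (hE : 65 / 16 * (1 + E) < 76 * b - 16 / 35) :
    -16 * b / (15 * N) - 8 * b * (3 * N - 4 * b ^ 2) / (3 * N ^ 3) + 4 / N ^ 2 + 4 / N ^ 3
      + 65 / 16 * E / N ^ 2 < -1 / (140 * N) := by
  have hN0 : 0 < N := by linarith
  rw [← sub_neg]
  have key : -16 * b / (15 * N) - 8 * b * (3 * N - 4 * b ^ 2) / (3 * N ^ 3) + 4 / N ^ 2 + 4 / N ^ 3
      + 65 / 16 * E / N ^ 2 - -1 / (140 * N) =
      ((1 / 140 - 16 * b / 15) * N ^ 2 + (4 + 65 / 16 * E - 8 * b) * N + 32 * b ^ 3 / 3 + 4)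
        / N ^ 3 := by
    field
  rw [key]
  apply div_neg_of_neg_of_pos _ (by positivity)
  have hlead : 0 ≤ 16 * b / 15 - 1 / 140 := by linarith
  nlinarith [mul_nonneg (sub_nonneg.2 hN) (sub_nonneg.2 hN), mul_nonneg (sub_nonneg.2 hN) hlead]

lemma Complex.norm_pow_two_mul (z : ℂ) (k : ℕ) : ‖z ^ (2 * k)‖ = normSq z ^ k := by
  rw [pow_mul, norm_pow, norm_pow, Complex.sq_norm]

lemma norm_laplaceG_exp_term_le {z : ℂ} (hz : z.re ≤ 0) (hN : 64 ≤ normSq z) :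
    ‖4 * exp (-2 * z) / z ^ 4 * ((z + 1) / z) ^ 2‖
      ≤ 65 / 16 * Real.exp (-2 * z.re) / normSq z ^ 2 := by
  have hN0 : 0 < normSq z := by linarith
  have hratio : ‖(z + 1) / z‖ ^ 2 ≤ 65 / 64 := by
    rw [norm_div, div_pow, Complex.sq_norm, Complex.sq_norm, div_le_iff₀ hN0]
    linarith [normSq_add_one_le hz]
  have hexp : ‖exp (-2 * z)‖ = Real.exp (-2 * z.re) := by simp [norm_exp]
  rw [norm_mul, norm_pow, norm_div, norm_mul, hexp, show z ^ 4 = z ^ (2 * 2) from rfl,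
    norm_pow_two_mul, Complex.norm_ofNat]
  calc 4 * Real.exp (-2 * z.re) / normSq z ^ 2 * ‖(z + 1) / z‖ ^ 2
      ≤ 4 * Real.exp (-2 * z.re) / normSq z ^ 2 * (65 / 64) := by gcongr
    _ = 65 / 16 * Real.exp (-2 * z.re) / normSq z ^ 2 := by ring

noncomputable def laplaceG (z : ℂ) : ℂ :=
  16 / (15 * z) - 8 / (3 * z ^ 3) + 4 / z ^ 4 - 4 / z ^ 6
    + 4 * exp (-2 * z) / z ^ 4 * ((z + 1) / z) ^ 2

lemma re_laplaceG_lt {z : ℂ} {b : ℝ} (hre : z.re = -b) (hb : 0.14 ≤ b) (hb' : b ≤ 1.25)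
    (hN : 64 ≤ normSq z) : (laplaceG z).re < -1 / (140 * normSq z) := by
  have e₁ : (16 / (15 * z)).re = -16 * b / (15 * normSq z) := by
    rw [show 16 / (15 * z) = ((16 / 15 : ℝ) : ℂ) * z⁻¹ by push_cast; ring, re_ofReal_mul, inv_re,
      hre]
    ring
  have e₃ : (8 / (3 * z ^ 3)).re
      = 8 * b * (3 * normSq z - 4 * b ^ 2) / (3 * normSq z ^ 3) := by
    have him : z.im ^ 2 = normSq z - b ^ 2 := by rw [normSq_apply, hre]; ring
    rw [show 8 / (3 * z ^ 3) = ((8 / 3 : ℝ) : ℂ) * (z ^ 3)⁻¹ by push_cast; ring, re_ofReal_mul,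
      re_inv_pow_three, hre, him]
    ring
  have e₄ : ‖(4 / z ^ 4 : ℂ)‖ = 4 / normSq z ^ 2 := by
    rw [norm_div, show z ^ 4 = z ^ (2 * 2) from rfl, norm_pow_two_mul, Complex.norm_ofNat]
  have e₆ : ‖(4 / z ^ 6 : ℂ)‖ = 4 / normSq z ^ 3 := by
    rw [norm_div, show z ^ 6 = z ^ (2 * 3) from rfl, norm_pow_two_mul, Complex.norm_ofNat]
  have htail := norm_laplaceG_exp_term_le (by linarith) hN
  rw [hre, neg_mul_neg] at htail
  have hmaj := re_laplaceG_majorant_lt hb hb' hN (one_add_exp_two_mul_lt hb hb')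
  simp only [laplaceG, add_re, sub_re, e₁, e₃]
  linarith [abs_le.1 (e₄ ▸ abs_re_le_norm (4 / z ^ 4)),
    abs_le.1 (e₆ ▸ abs_re_le_norm (4 / z ^ 6)), abs_le.1 (htail.trans' (abs_re_le_norm _))]

theorem stmt_16 (G : ℂ → ℂ)
    (hG : ∀ z, G z = 16 / (15 * z) - 8 / (3 * z^3) + 4 / z^4 - 4 / z^6 +
      (4 * Complex.exp (-2 * z) / z^4) * ((z + 1) / z)^2)
    (b t : ℝ) (hb : 0.14 ≤ b) (hb' : b ≤ 1.25) (ht : 8 ≤ |t|) :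
    (G (-(b:ℂ) + t * Complex.I)).re <
      -1 / (140 * ‖-(b:ℂ) + t * Complex.I‖^2) := by
  have hN : normSq (-(b:ℂ) + t * I) = b ^ 2 + t ^ 2 := by simp [normSq_apply]; ring
  obtain rfl : G = laplaceG := funext hG
  rw [Complex.sq_norm]
  exact re_laplaceG_lt (by simp) hb hb' (by nlinarith [sq_abs t])
end

section
/- Let G(z) = 16/(15z) - 8/(3z³) + 4/z⁴ - 4/z⁶ + (4e^{-2z}/z⁴)((z+1)/z)² and G'(z) = -16/(15z²) + 8/z⁴ - 16/z⁵ + 24/z⁷ - (8e^{-2z}/z⁴)(1 + 4/z + 6/z² + 3/z³). Then for z = a + it with 0 ≤ a ≤ 13 and |t| ≥ 14, Re G'(z) > 9/|z|⁴. -/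
/-!
Of the terms of `G'(z)`, only `-16/(15z²)` has a real part of the right size: it equals
`16(t² - a²)/(15|z|⁴)`, and `t² - a² ≥ 14² - 13² = 27`. Every other term is bounded in modulus,
using `|e^{-2z}| ≤ 1` on the right half-plane, and together they cost at most
`16/|z|⁴ · (1 + 3/|z| + 3/|z|² + 3/|z|³)`; for `|z| ≥ 14` what remains exceeds `9/|z|⁴`.
-/

open Complex

namespace Complex

lemma neg_norm_le_re (w : ℂ) : -‖w‖ ≤ w.re :=
  (abs_le.mp (abs_re_le_norm w)).1

lemma re_inv_sq (z : ℂ) : ((z ^ 2)⁻¹).re = (z.re ^ 2 - z.im ^ 2) / ‖z‖ ^ 4 := by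
  rw [inv_re, map_pow, normSq_eq_norm_sq]
  simp only [sq, mul_re]
  ring

lemma norm_exp_neg_mul_le_one {c : ℝ} (hc : 0 ≤ c) {z : ℂ} (hz : 0 ≤ z.re) :
    ‖exp (-(c * z))‖ ≤ 1 := by
  rw [norm_exp, Real.exp_le_one_iff]
  simpa using mul_nonneg hc hz

end Complex

/-- The derivative `G'` of the Laplace transform of `g(u) = (2-u)³(4+6u+u²)/30` on `[0, 2]`. -/
noncomputable def laplaceDeriv (z : ℂ) : ℂ :=
  -16 / (15 * z ^ 2) + 8 / z ^ 4 - 16 / z ^ 5 + 24 / z ^ 7 -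
    (8 * exp (-2 * z) / z ^ 4) * (1 + 4 / z + 6 / z ^ 2 + 3 / z ^ 3)

lemma norm_exp_term_le {z : ℂ} (hz : 0 ≤ z.re) :
    ‖(8 * exp (-2 * z) / z ^ 4) * (1 + 4 / z + 6 / z ^ 2 + 3 / z ^ 3)‖ ≤
      8 / ‖z‖ ^ 4 * (1 + 4 / ‖z‖ + 6 / ‖z‖ ^ 2 + 3 / ‖z‖ ^ 3) := by
  have hexp : ‖8 * exp (-2 * z) / z ^ 4‖ ≤ 8 / ‖z‖ ^ 4 := by
    have h := norm_exp_neg_mul_le_one (c := 2) zero_le_two hz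
    rw [← neg_mul] at h
    rw [norm_div, norm_mul, norm_pow, RCLike.norm_ofNat]
    gcongr
    exact mul_le_of_le_one_right (by norm_num) h
  have hpoly : ‖1 + 4 / z + 6 / z ^ 2 + 3 / z ^ 3‖ ≤ 1 + 4 / ‖z‖ + 6 / ‖z‖ ^ 2 + 3 / ‖z‖ ^ 3 := by
    refine (norm_add₄_le ..).trans (le_of_eq ?_)
    simp
  rw [norm_mul]
  gcongr

lemma re_laplaceDeriv_ge {z : ℂ} (hz : 0 ≤ z.re) :
    16 / ‖z‖ ^ 4 * ((z.im ^ 2 - z.re ^ 2) / 15 - 1 - 3 / ‖z‖ - 3 / ‖z‖ ^ 2 - 3 / ‖z‖ ^ 3) ≤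
      (laplaceDeriv z).re := by
  have h2 : (-16 / (15 * z ^ 2)).re = 16 / 15 * ((z.im ^ 2 - z.re ^ 2) / ‖z‖ ^ 4) := by
    have hcoef : (-16 : ℂ) * 15⁻¹ = ((-16 / 15 : ℝ) : ℂ) := by push_cast; ring
    rw [div_eq_mul_inv, mul_inv, ← mul_assoc, hcoef, re_ofReal_mul, re_inv_sq]
    ring
  have h4 := neg_norm_le_re (8 / z ^ 4)
  have h5 := re_le_norm (16 / z ^ 5)
  have h7 := neg_norm_le_re (24 / z ^ 7)
  have hE := (re_le_norm _).trans (norm_exp_term_le hz)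
  simp only [norm_div, norm_pow, RCLike.norm_ofNat] at h4 h5 h7
  simp only [laplaceDeriv, sub_re, add_re, h2]
  have hexpand :
      16 / ‖z‖ ^ 4 * ((z.im ^ 2 - z.re ^ 2) / 15 - 1 - 3 / ‖z‖ - 3 / ‖z‖ ^ 2 - 3 / ‖z‖ ^ 3) =
        16 / 15 * ((z.im ^ 2 - z.re ^ 2) / ‖z‖ ^ 4) - 8 / ‖z‖ ^ 4 - 16 / ‖z‖ ^ 5 - 24 / ‖z‖ ^ 7 -
          8 / ‖z‖ ^ 4 * (1 + 4 / ‖z‖ + 6 / ‖z‖ ^ 2 + 3 / ‖z‖ ^ 3) := by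
    ring
  linarith

lemma nine_div_lt_of_fourteen_le {r d : ℝ} (hr : 14 ≤ r) (hd : 27 ≤ d) :
    9 / r ^ 4 < 16 / r ^ 4 * (d / 15 - 1 - 3 / r - 3 / r ^ 2 - 3 / r ^ 3) := by
  have hr0 : 0 < r := by linarith
  have h1 : 3 / r ≤ 3 / 14 := by gcongr
  have h2 : 3 / r ^ 2 ≤ 3 / 14 ^ 2 := by gcongr
  have h3 : 3 / r ^ 3 ≤ 3 / 14 ^ 3 := by gcongr
  rw [mul_comm, mul_div_assoc', div_lt_div_iff_of_pos_right (by positivity)]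
  norm_num at h2 h3
  linarith

theorem stmt_17 (G' : ℂ → ℂ)
    (hG' : ∀ z, G' z = -16 / (15 * z^2) + 8 / z^4 - 16 / z^5 + 24 / z^7 -
      (8 * Complex.exp (-2 * z) / z^4) * (1 + 4 / z + 6 / z^2 + 3 / z^3))
    (a t : ℝ) (ha : 0 ≤ a) (ha' : a ≤ 13) (ht : 14 ≤ |t|) :
    9 / ‖(a:ℂ) + t * Complex.I‖^4 < (G' ((a:ℂ) + t * Complex.I)).re := by
  set z : ℂ := a + t * I
  have hre : z.re = a := by simp [z]
  have him : z.im = t := by simp [z]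
  have hnorm : 14 ≤ ‖z‖ := ht.trans (him ▸ abs_im_le_norm z)
  have hd : 27 ≤ z.im ^ 2 - z.re ^ 2 := by
    rw [hre, him, ← sq_abs t]
    nlinarith
  rw [hG', ← laplaceDeriv]
  exact (nine_div_lt_of_fourteen_le hnorm hd).trans_le (re_laplaceDeriv_ge (hre ▸ ha))
end
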